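/- arXiv:2409.07970 — 8 statements merged into one kernel-verified Lean document; each statement's English description precedes it below -/
import Mathlib

section
/- Let p be a design and 𝒟 ⊆ D a class of unbiased estimators with the property that whenever e₀ ∈ 𝒟 and e₀ + d ∈ 𝒟, also e₀ + a·d ∈ 𝒟 for every a ∈ ℝ. If e₀ is admissible in 𝒟, then e₀ is the only estimator e ∈ 𝒟 satisfying V(e) ≤ V(e₀) for all B ∈ 𝔅(p) and all y; that is, any such e satisfies e(s₀; y, B) = e₀(s₀; y, B) for every s₀ ∈ S₀, every y and every B ∈ 𝔅(p). -/
open scoped Classical BigOperators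

/-- A bipartite incidence graph on the set `F` of sampling units, with a finite
set `Omega ⊆ ℕ` of study units and edges `H ⊆ F × Omega`. -/
structure BIGraph (F : Type) where
  Omega : Finset ℕ
  H : Finset (F × ℕ)
  mem_Omega : ∀ e ∈ H, e.2 ∈ Omega

namespace BIGraph

variable {F : Type} [Fintype F] [DecidableEq F]

/-- The successors `α_i` of a sampling unit `i`. -/
noncomputable def alpha (B : BIGraph F) (i : F) : Finset ℕ :=
  B.Omega.filter fun κ => (i, κ) ∈ B.H

/-- The ancestors `β_κ` of a study unit `κ`. -/
noncomputable def beta (B : BIGraph F) (κ : ℕ) : Finset F :=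
  Finset.univ.filter fun i => (i, κ) ∈ B.H

/-- The study sample `Ω_s(s₀) = ⋃_{i ∈ s₀} α_i`. -/
noncomputable def omegaS (B : BIGraph F) (s₀ : Finset F) : Finset ℕ :=
  B.Omega.filter fun κ => ∃ i ∈ s₀, (i, κ) ∈ B.H

/-- The graph `B^(Λ)`: remove the study units in `Λ` and all edges ending in `Λ`. -/
noncomputable def remove (B : BIGraph F) (Λ : Finset ℕ) : BIGraph F where
  Omega := B.Omega \ Λ
  H := B.H.filter fun e => e.2 ∉ Λ
  mem_Omega := by
    intro e he
    rw [Finset.mem_filter] at he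
    exact Finset.mem_sdiff.mpr ⟨B.mem_Omega e he.1, he.2⟩

/-- The sample graph: the edges of `B` emanating from the initial sample `s₀`. -/
noncomputable def sampleGraph (B : BIGraph F) (s₀ : Finset F) : Finset (F × ℕ) :=
  B.H.filter fun e => e.1 ∈ s₀

end BIGraph

/-- The target total `θ = ∑_{κ ∈ Ω} y_κ`. -/
noncomputable def total {F : Type} (B : BIGraph F) (y : ℕ → ℝ) : ℝ :=
  ∑ κ ∈ B.Omega, y κ

/-- A sampling design: a probability mass function on subsets of `F`. -/
structure Design (F : Type) [Fintype F] [DecidableEq F] where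
  p : Finset F → ℝ
  nonneg : ∀ s, 0 ≤ p s
  sum_one : ∑ s : Finset F, p s = 1

namespace Design

variable {F : Type} [Fintype F] [DecidableEq F]

/-- The initial-sample inclusion probability `π_i`. -/
noncomputable def pii (D : Design F) (i : F) : ℝ :=
  ∑ s : Finset F, if i ∈ s then D.p s else 0

/-- The study-sample inclusion probability `π_(κ)`. -/
noncomputable def piK (D : Design F) (B : BIGraph F) (κ : ℕ) : ℝ :=
  ∑ s : Finset F, if κ ∈ B.omegaS s then D.p s else 0

/-- `B` is covered by the design: `π_(κ) > 0` for all study units. -/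
def Covered (D : Design F) (B : BIGraph F) : Prop :=
  ∀ κ ∈ B.Omega, 0 < D.piK B κ

end Design

/-- An estimator: a real value for each initial sample, each `y` and each graph. -/
abbrev Estim (F : Type) := Finset F → (ℕ → ℝ) → BIGraph F → ℝ

namespace Design

variable {F : Type} [Fintype F] [DecidableEq F]

/-- Expectation of an estimator over repeated sampling. -/
noncomputable def expect (D : Design F) (e : Estim F) (y : ℕ → ℝ) (B : BIGraph F) : ℝ :=
  ∑ s : Finset F, D.p s * e s y B

/-- Variance of an estimator over repeated sampling. -/
noncomputable def variance (D : Design F) (e : Estim F) (y : ℕ → ℝ) (B : BIGraph F) : ℝ :=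
  ∑ s : Finset F, D.p s * (e s y B - total B y) ^ 2

end Design

variable {F : Type} [Fintype F] [DecidableEq F]

/-- Unbiasedness: `E(e) = θ` for every covered graph and every `y`. -/
def Unbiased (D : Design F) (e : Estim F) : Prop :=
  ∀ B : BIGraph F, D.Covered B → ∀ y : ℕ → ℝ, D.expect e y B = total B y

/-- Zero-invariance: removing study units whose `y`-value is zero does not change
the estimator, and the estimator vanishes on an empty study sample. -/
def ZeroInvariant (e : Estim F) : Prop :=
  (∀ (s₀ : Finset F) (y y' : ℕ → ℝ) (B : BIGraph F) (Λ : Finset ℕ),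
    Λ ⊆ B.Omega → (∀ κ ∈ Λ, y κ = 0) → (∀ κ ∈ B.Omega \ Λ, y' κ = y κ) →
    e s₀ y B = e s₀ y' (B.remove Λ)) ∧
  (∀ (s₀ : Finset F) (y : ℕ → ℝ) (B : BIGraph F), B.omegaS s₀ = ∅ → e s₀ y B = 0)

/-- Sufficiency: the estimator only depends on the initial sample through the
realised study sample. -/
def Sufficient (D : Design F) (e : Estim F) : Prop :=
  ∀ s₀ s₀' : Finset F, 0 < D.p s₀ → 0 < D.p s₀' →
    ∀ (y : ℕ → ℝ) (B : BIGraph F), B.omegaS s₀ = B.omegaS s₀' → e s₀ y B = e s₀' y B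

/-- Admissibility of `e₀` in a class `𝒟` of estimators: no estimator in `𝒟` is
uniformly at least as good and strictly better somewhere. -/
def AdmissibleIn (D : Design F) (𝒟 : Set (Estim F)) (e₀ : Estim F) : Prop :=
  ¬ ∃ e ∈ 𝒟,
    (∀ B : BIGraph F, D.Covered B → ∀ y : ℕ → ℝ,
      D.variance e y B ≤ D.variance e₀ y B) ∧
    (∃ B : BIGraph F, D.Covered B ∧ ∃ y : ℕ → ℝ,
      D.variance e y B < D.variance e₀ y B)

/-- The class `D` of unbiased estimators. -/
def classD (D : Design F) : Set (Estim F) := {e | Unbiased D e}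

/-- The class `D*` of unbiased zero-invariant estimators. -/
def classDstar (D : Design F) : Set (Estim F) :=
  {e | Unbiased D e ∧ ZeroInvariant e}

/-- Sample-space spanned: `e(s₀; y, B) = ∑_{i ∈ s₀} a_i(y, B)` for functions `a_i`
not depending on the sample. -/
def SampleSpanned (D : Design F) (e : Estim F) : Prop :=
  ∃ a : F → (ℕ → ℝ) → BIGraph F → ℝ,
    ∀ s₀ : Finset F, 0 < D.p s₀ → ∀ (y : ℕ → ℝ) (B : BIGraph F),
      e s₀ y B = ∑ i ∈ s₀, a i y B

/-- Proposition 1: if `e₀` is admissible in a class `𝒟 ⊆ D` closed under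
`e₀ + d ∈ 𝒟 → e₀ + a·d ∈ 𝒟`, then any `e ∈ 𝒟` whose variance is uniformly no
larger than that of `e₀` coincides with `e₀` on the support, for every `y` and
every covered graph. -/
theorem statement0 (D : Design F) (𝒟 : Set (Estim F)) (h𝒟 : 𝒟 ⊆ classD D)
    (hclosed : ∀ e₀ d : Estim F, e₀ ∈ 𝒟 →
      (fun s y B => e₀ s y B + d s y B) ∈ 𝒟 →
      ∀ a : ℝ, (fun s y B => e₀ s y B + a * d s y B) ∈ 𝒟)
    (e₀ : Estim F) (he₀ : e₀ ∈ 𝒟) (hadm : AdmissibleIn D 𝒟 e₀)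
    (e : Estim F) (he : e ∈ 𝒟)
    (hdom : ∀ B : BIGraph F, D.Covered B → ∀ y : ℕ → ℝ,
      D.variance e y B ≤ D.variance e₀ y B) :
    ∀ s₀ : Finset F, 0 < D.p s₀ → ∀ (y : ℕ → ℝ) (B : BIGraph F), D.Covered B →
      e s₀ y B = e₀ s₀ y B := by
  -- set up the midpoint estimator e₁ = e₀ + (1/2)(e - e₀)
  set d : Estim F := fun s y B => e s y B - e₀ s y B with hd
  have hmem : (fun s y B => e₀ s y B + d s y B) ∈ 𝒟 := by
    have h : (fun s y B => e₀ s y B + d s y B) = e := by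
      funext s y B; simp [hd]
    rw [h]; exact he
  have he₁mem := hclosed e₀ d he₀ hmem (1/2 : ℝ)
  set e₁ : Estim F := fun s y B => e₀ s y B + (1/2 : ℝ) * d s y B with he₁
  have key : ∀ (B' : BIGraph F) (y' : ℕ → ℝ),
      D.variance e₁ y' B' = D.variance e₀ y' B'
        + (1/2) * (D.variance e y' B' - D.variance e₀ y' B')
        - (1/4) * ∑ s : Finset F, D.p s * (d s y' B') ^ 2 := by
    intro B' y'
    simp only [Design.variance]
    have hterm : ∀ s : Finset F,
        D.p s * (e₁ s y' B' - total B' y') ^ 2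
          = D.p s * (e₀ s y' B' - total B' y') ^ 2
            + (1/2) * (D.p s * (e s y' B' - total B' y') ^ 2
              - D.p s * (e₀ s y' B' - total B' y') ^ 2)
            - (1/4) * (D.p s * (d s y' B') ^ 2) := by
      intro s; simp only [he₁, hd]; ring
    rw [Finset.sum_congr rfl fun s _ => hterm s]
    rw [Finset.sum_sub_distrib, Finset.sum_add_distrib, ← Finset.mul_sum,
      ← Finset.mul_sum, Finset.sum_sub_distrib]
  have hQ : ∀ (B' : BIGraph F) (y' : ℕ → ℝ),
      0 ≤ ∑ s : Finset F, D.p s * (d s y' B') ^ 2 := by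
    intro B' y'
    exact Finset.sum_nonneg fun s _ => mul_nonneg (D.nonneg s) (sq_nonneg _)
  have hdom1 : ∀ B' : BIGraph F, D.Covered B' → ∀ y' : ℕ → ℝ,
      D.variance e₁ y' B' ≤ D.variance e₀ y' B' := by
    intro B' hC y'
    have h1 := hdom B' hC y'
    have h2 := hQ B' y'
    rw [key B' y']; linarith
  have heq : ∀ B' : BIGraph F, D.Covered B' → ∀ y' : ℕ → ℝ,
      D.variance e₁ y' B' = D.variance e₀ y' B' := by
    intro B' hC y'
    by_contra hne
    exact hadm ⟨e₁, he₁mem, hdom1,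
      B', hC, y', lt_of_le_of_ne (hdom1 B' hC y') hne⟩
  intro s₀ hp y B hC
  have h0 := heq B hC y
  rw [key B y] at h0
  have h1 := hdom B hC y
  have h2 := hQ B y
  have hQ0 : ∑ s : Finset F, D.p s * (d s y B) ^ 2 = 0 := by linarith
  have hzero : D.p s₀ * (d s₀ y B) ^ 2 = 0 := by
    have := (Finset.sum_eq_zero_iff_of_nonneg
      (fun s _ => mul_nonneg (D.nonneg s) (sq_nonneg (d s y B)))).mp hQ0
    exact this s₀ (Finset.mem_univ s₀)
  have hd0 : d s₀ y B = 0 := by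
    rcases mul_eq_zero.mp hzero with h | h
    · exact absurd h (ne_of_gt hp)
    · exact pow_eq_zero_iff (by norm_num) |>.mp h
  have := hd0
  simp only [hd] at this
  linarith
end

section
/- Let e be an unbiased zero-invariant estimator in BIGS. Then for every covered graph B and every y, V(e_ZRB) ≤ V(e_RB) ≤ V(e); moreover, if for some (y, B) the function e_RB is not constant on some class [s₀] (s₀ ∈ S₀), then V(e_ZRB) < V(e_RB) at that (y, B), so that e_RB is inadmissible in the class D of unbiased estimators whenever e_RB differs from e_ZRB at some (y, B). -/
open scoped Classical BigOperators

variable {F : Type} [Fintype F] [DecidableEq F]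

/-- The set `Ω₍₀₎` of study units with non-zero `y`-value. -/
noncomputable def nzSet (B : BIGraph F) (y : ℕ → ℝ) : Finset ℕ :=
  B.Omega.filter fun κ => y κ ≠ 0

/-- The class `[s₀]` of initial samples in the support whose study sample has the
same non-zero part as that of `s₀`. -/
noncomputable def zrbClass (D : Design F) (B : BIGraph F) (y : ℕ → ℝ) (s₀ : Finset F) :
    Finset (Finset F) :=
  Finset.univ.filter fun s' =>
    0 < D.p s' ∧ B.omegaS s' ∩ nzSet B y = B.omegaS s₀ ∩ nzSet B y

/-- The zero-invariant Rao–Blackwellization `ZRB(e)`. -/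
noncomputable def zrb (D : Design F) (e : Estim F) : Estim F := fun s₀ y B =>
  (∑ s' ∈ zrbClass D B y s₀, D.p s' * e s' y B) / ∑ s' ∈ zrbClass D B y s₀, D.p s'

/-- The class of initial samples in the support with the same study sample as `s₀`. -/
noncomputable def rbClass (D : Design F) (B : BIGraph F) (s₀ : Finset F) :
    Finset (Finset F) :=
  Finset.univ.filter fun s' => 0 < D.p s' ∧ B.omegaS s' = B.omegaS s₀

/-- The Rao–Blackwellization `e_RB`. -/
noncomputable def rb (D : Design F) (e : Estim F) : Estim F := fun s₀ y B =>
  (∑ s' ∈ rbClass D B s₀, D.p s' * e s' y B) / ∑ s' ∈ rbClass D B s₀, D.p s'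

section Aux

set_option linter.unusedSectionVars false

variable {F : Type} [Fintype F] [DecidableEq F]

/-- Class of `s` under the equivalence `f s' = f s` restricted to the support of `p`. -/
noncomputable def cls (p : Finset F → ℝ) (f : Finset F → Finset ℕ) (s : Finset F) :
    Finset (Finset F) :=
  Finset.univ.filter fun s' => 0 < p s' ∧ f s' = f s

/-- Weighted average of `g` over the class of `s`. -/
noncomputable def avg (p : Finset F → ℝ) (f : Finset F → Finset ℕ) (g : Finset F → ℝ)
    (s : Finset F) : ℝ :=
  (∑ s' ∈ cls p f s, p s' * g s') / ∑ s' ∈ cls p f s, p s'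

lemma cls_congr (p : Finset F → ℝ) (f : Finset F → Finset ℕ) {s t : Finset F}
    (h : f s = f t) : cls p f s = cls p f t := by
  simp only [cls, h]

lemma avg_congr (p : Finset F → ℝ) (f : Finset F → Finset ℕ) (g : Finset F → ℝ)
    {s t : Finset F} (h : f s = f t) : avg p f g s = avg p f g t := by
  simp only [avg, cls_congr p f h]

lemma sum_filter_pos (p : Finset F → ℝ) (hp : ∀ s, 0 ≤ p s) (q : Finset F → Prop)
    (c : Finset F → ℝ) :
    ∑ s ∈ Finset.univ.filter (fun s => 0 < p s ∧ q s), p s * c s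
      = ∑ s ∈ Finset.univ.filter q, p s * c s := by
  rw [Finset.sum_filter, Finset.sum_filter]
  refine Finset.sum_congr rfl fun s _ => ?_
  by_cases hq : q s
  · by_cases hps : 0 < p s
    · simp [hq, hps]
    · have : p s = 0 := le_antisymm (not_lt.mp hps) (hp s)
      simp [hq, hps, this]
  · simp [hq]

lemma den_pos (p : Finset F → ℝ) (hp : ∀ s, 0 ≤ p s) (f : Finset F → Finset ℕ)
    {s : Finset F} (hs : 0 < p s) : 0 < ∑ s' ∈ cls p f s, p s' := by
  refine Finset.sum_pos' (fun i _ => hp i) ⟨s, ?_, hs⟩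
  simp [cls, hs]

/-- Key projection property: averaging against a class-constant function. -/
lemma avg_mul_sum (p : Finset F → ℝ) (hp : ∀ s, 0 ≤ p s) (f : Finset F → Finset ℕ)
    (g h : Finset F → ℝ) (hh : ∀ s s', f s = f s' → h s = h s') :
    ∑ s : Finset F, p s * (avg p f g s * h s) = ∑ s : Finset F, p s * (g s * h s) := by
  have main : ∑ s : Finset F, ∑ s' : Finset F,
      (if s' ∈ cls p f s then (p s * h s / (∑ t ∈ cls p f s, p t)) * (p s' * g s') else 0)
      = ∑ s : Finset F, p s * (avg p f g s * h s) := by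
    refine Finset.sum_congr rfl fun s _ => ?_
    rw [Finset.sum_ite_mem, Finset.univ_inter, ← Finset.mul_sum]
    unfold avg
    ring
  rw [← main, Finset.sum_comm]
  refine Finset.sum_congr rfl fun s' _ => ?_
  by_cases hs' : 0 < p s'
  · have hden' : (∑ t ∈ cls p f s', p t) ≠ 0 := ne_of_gt (den_pos p hp f hs')
    have step : ∀ s : Finset F,
        (if s' ∈ cls p f s then (p s * h s / (∑ t ∈ cls p f s, p t)) * (p s' * g s') else 0)
        = (if f s = f s' then p s * ((h s' / (∑ t ∈ cls p f s', p t)) * (p s' * g s')) else 0) := by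
      intro s
      by_cases hf : f s = f s'
      · have hmem : s' ∈ cls p f s := by simp [cls, hs', hf.symm]
        rw [if_pos hmem, if_pos hf, cls_congr p f hf]
        by_cases hps : 0 < p s
        · rw [hh s s' hf]; ring
        · have : p s = 0 := le_antisymm (not_lt.mp hps) (hp s)
          simp [this]
      · have hmem : s' ∉ cls p f s := by simp [cls]; intro _; exact fun h => hf h.symm
        rw [if_neg hmem, if_neg hf]
    rw [Finset.sum_congr rfl fun s _ => step s]
    rw [← Finset.sum_filter]
    have hsum : ∑ s ∈ Finset.univ.filter (fun s => f s = f s'),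
        p s * ((h s' / (∑ t ∈ cls p f s', p t)) * (p s' * g s'))
        = (∑ s ∈ Finset.univ.filter (fun s => f s = f s'), p s)
          * ((h s' / (∑ t ∈ cls p f s', p t)) * (p s' * g s')) := by
      rw [Finset.sum_mul]
    have hden_eq : ∑ s ∈ Finset.univ.filter (fun s => f s = f s'), p s
        = ∑ t ∈ cls p f s', p t := by
      have h2 := sum_filter_pos p hp (fun s => f s = f s') (fun _ => 1)
      simp only [mul_one] at h2
      rw [cls]
      convert h2.symm using 2 <;> congr!
    rw [hsum, hden_eq]
    field_simp
  · have : p s' = 0 := le_antisymm (not_lt.mp hs') (hp s')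
    simp [this, cls, hs']

lemma avg_var_decomp (p : Finset F → ℝ) (hp : ∀ s, 0 ≤ p s) (f : Finset F → Finset ℕ)
    (g : Finset F → ℝ) (θ : ℝ) :
    ∑ s : Finset F, p s * (g s - θ) ^ 2
      = (∑ s : Finset F, p s * (avg p f g s - θ) ^ 2)
        + ∑ s : Finset F, p s * (g s - avg p f g s) ^ 2 := by
  have h1 := avg_mul_sum p hp f g (fun s => avg p f g s - θ)
    (fun s s' hf => by rw [avg_congr p f g hf])
  have expand : ∀ s : Finset F, p s * (g s - θ) ^ 2
      = (p s * (avg p f g s - θ) ^ 2 + p s * (g s - avg p f g s) ^ 2)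
        + 2 * (p s * (g s * (avg p f g s - θ)) - p s * (avg p f g s * (avg p f g s - θ))) :=
    fun s => by ring
  calc ∑ s : Finset F, p s * (g s - θ) ^ 2
      = ∑ s : Finset F, ((p s * (avg p f g s - θ) ^ 2 + p s * (g s - avg p f g s) ^ 2)
        + 2 * (p s * (g s * (avg p f g s - θ)) - p s * (avg p f g s * (avg p f g s - θ)))) :=
        Finset.sum_congr rfl fun s _ => expand s
    _ = (∑ s : Finset F, (p s * (avg p f g s - θ) ^ 2 + p s * (g s - avg p f g s) ^ 2))
        + 2 * ((∑ s : Finset F, p s * (g s * (avg p f g s - θ)))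
          - ∑ s : Finset F, p s * (avg p f g s * (avg p f g s - θ))) := by
        rw [Finset.sum_add_distrib, ← Finset.mul_sum, Finset.sum_sub_distrib]
    _ = _ := by rw [h1, Finset.sum_add_distrib]; ring

end Aux

section Bridge

variable {F : Type} [Fintype F] [DecidableEq F]

lemma rb_eq_avg (D : Design F) (e : Estim F) (y : ℕ → ℝ) (B : BIGraph F) (s : Finset F) :
    rb D e s y B = avg D.p (fun s' => B.omegaS s') (fun s' => e s' y B) s := rfl

lemma zrbClass_eq_cls (D : Design F) (e : Estim F) (y : ℕ → ℝ) (B : BIGraph F) (s : Finset F) :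
    zrbClass D B y s = cls D.p (fun s' => B.omegaS s' ∩ nzSet B y) s := rfl

lemma zrb_eq_avg (D : Design F) (e : Estim F) (y : ℕ → ℝ) (B : BIGraph F) (s : Finset F) :
    zrb D e s y B = avg D.p (fun s' => B.omegaS s' ∩ nzSet B y) (fun s' => e s' y B) s := rfl

lemma sum_cls (p : Finset F → ℝ) (hp : ∀ s, 0 ≤ p s) (f : Finset F → Finset ℕ)
    (c : Finset F → ℝ) (s : Finset F) :
    ∑ s' ∈ cls p f s, p s' * c s'
      = ∑ s' : Finset F, p s' * (c s' * (if f s' = f s then 1 else 0)) := by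
  unfold cls
  rw [Finset.sum_filter]
  refine Finset.sum_congr rfl fun s' _ => ?_
  by_cases hq : f s' = f s
  · by_cases hps : 0 < p s'
    · simp [hq, hps]
    · have h0 : p s' = 0 := le_antisymm (not_lt.mp hps) (hp s')
      simp [hq, hps, h0]
  · simp [hq]

lemma tower (D : Design F) (e : Estim F) (y : ℕ → ℝ) (B : BIGraph F) (s : Finset F) :
    zrb D e s y B
      = avg D.p (fun s' => B.omegaS s' ∩ nzSet B y) (fun s' => rb D e s' y B) s := by
  set fz : Finset F → Finset ℕ := fun s' => B.omegaS s' ∩ nzSet B y with hfz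
  have hnum : ∑ s' ∈ cls D.p fz s, D.p s' * e s' y B
      = ∑ s' ∈ cls D.p fz s, D.p s' * rb D e s' y B := by
    rw [sum_cls D.p D.nonneg fz (fun s' => e s' y B) s,
        sum_cls D.p D.nonneg fz (fun s' => rb D e s' y B) s]
    have hind : ∀ a b : Finset F, B.omegaS a = B.omegaS b →
        (if fz a = fz s then (1:ℝ) else 0) = (if fz b = fz s then (1:ℝ) else 0) := by
      intro a b hab
      have : fz a = fz b := by simp only [hfz, hab]
      rw [this]
    have key := avg_mul_sum D.p D.nonneg (fun s' => B.omegaS s') (fun s' => e s' y B)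
      (fun s' => if fz s' = fz s then (1:ℝ) else 0) hind
    rw [← key]
    refine Finset.sum_congr rfl fun s' _ => ?_
    rw [rb_eq_avg]
  show (∑ s' ∈ zrbClass D B y s, D.p s' * e s' y B) / ∑ s' ∈ zrbClass D B y s, D.p s' = _
  rw [zrbClass_eq_cls D e y B s]
  unfold avg
  rw [hnum]

end Bridge
/-- Proposition 3: for an unbiased zero-invariant estimator `e`,
`V(e_ZRB) ≤ V(e_RB) ≤ V(e)`; the first inequality is strict at any `(y, B)` where
`e_RB` is not constant on some class `[s₀]`; consequently `e_RB` is inadmissible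
in the class `D` of unbiased estimators whenever it differs from `e_ZRB`
somewhere. -/
theorem statement2 (D : Design F) (e : Estim F) (he : e ∈ classDstar D) :
    (∀ B : BIGraph F, D.Covered B → ∀ y : ℕ → ℝ,
      D.variance (zrb D e) y B ≤ D.variance (rb D e) y B ∧
      D.variance (rb D e) y B ≤ D.variance e y B) ∧
    (∀ B : BIGraph F, D.Covered B → ∀ (y : ℕ → ℝ) (s₀ s₀' : Finset F),
      0 < D.p s₀ → 0 < D.p s₀' →
      B.omegaS s₀' ∩ nzSet B y = B.omegaS s₀ ∩ nzSet B y →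
      rb D e s₀ y B ≠ rb D e s₀' y B →
      D.variance (zrb D e) y B < D.variance (rb D e) y B) ∧
    ((∃ B : BIGraph F, D.Covered B ∧ ∃ (y : ℕ → ℝ) (s₀ : Finset F),
        0 < D.p s₀ ∧ rb D e s₀ y B ≠ zrb D e s₀ y B) →
      ¬ AdmissibleIn D (classD D) (rb D e)) := by
  obtain ⟨hunb, _hzi⟩ := he
  have hp := D.nonneg
  have hVrb : ∀ (B : BIGraph F) (y : ℕ → ℝ),
      D.variance (rb D e) y B
        = ∑ s : Finset F, D.p s *
            (avg D.p (fun s' => B.omegaS s') (fun s' => e s' y B) s - total B y) ^ 2 :=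
    fun B y => Finset.sum_congr rfl fun s _ => by rw [rb_eq_avg]
  have hVzrb : ∀ (B : BIGraph F) (y : ℕ → ℝ),
      D.variance (zrb D e) y B
        = ∑ s : Finset F, D.p s *
            (avg D.p (fun s' => B.omegaS s' ∩ nzSet B y)
              (fun s' => rb D e s' y B) s - total B y) ^ 2 :=
    fun B y => Finset.sum_congr rfl fun s _ => by rw [tower]
  have part1 : ∀ (B : BIGraph F) (y : ℕ → ℝ),
      D.variance (zrb D e) y B ≤ D.variance (rb D e) y B ∧
      D.variance (rb D e) y B ≤ D.variance e y B := by
    intro B y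
    constructor
    · have hd := avg_var_decomp D.p hp (fun s' => B.omegaS s' ∩ nzSet B y)
        (fun s' => rb D e s' y B) (total B y)
      have hVrb' : D.variance (rb D e) y B
          = ∑ s : Finset F, D.p s * (rb D e s y B - total B y) ^ 2 := rfl
      rw [hVzrb B y, hVrb', hd]
      refine le_add_of_nonneg_right ?_
      exact Finset.sum_nonneg fun s _ => mul_nonneg (hp s) (sq_nonneg _)
    · have hd := avg_var_decomp D.p hp (fun s' => B.omegaS s')
        (fun s' => e s' y B) (total B y)
      have hVe : D.variance e y B
          = ∑ s : Finset F, D.p s * (e s y B - total B y) ^ 2 := rfl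
      rw [hVrb B y, hVe, hd]
      refine le_add_of_nonneg_right ?_
      exact Finset.sum_nonneg fun s _ => mul_nonneg (hp s) (sq_nonneg _)
  have strictV : ∀ (B : BIGraph F) (y : ℕ → ℝ) (t : Finset F), 0 < D.p t →
      rb D e t y B ≠ avg D.p (fun s' => B.omegaS s' ∩ nzSet B y)
        (fun s' => rb D e s' y B) t →
      D.variance (zrb D e) y B < D.variance (rb D e) y B := by
    intro B y t hpt hnet
    have hd := avg_var_decomp D.p hp (fun s' => B.omegaS s' ∩ nzSet B y)
      (fun s' => rb D e s' y B) (total B y)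
    have hC : 0 < ∑ s : Finset F, D.p s *
        (rb D e s y B - avg D.p (fun s' => B.omegaS s' ∩ nzSet B y)
          (fun s' => rb D e s' y B) s) ^ 2 := by
      refine Finset.sum_pos' (fun s _ => mul_nonneg (hp s) (sq_nonneg _))
        ⟨t, Finset.mem_univ t, ?_⟩
      exact mul_pos hpt (lt_of_le_of_ne (sq_nonneg _)
        (Ne.symm (pow_ne_zero 2 (sub_ne_zero.mpr hnet))))
    have hVrb' : D.variance (rb D e) y B
        = ∑ s : Finset F, D.p s * (rb D e s y B - total B y) ^ 2 := rfl
    rw [hVzrb B y, hVrb', hd]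
    exact lt_add_of_pos_right _ hC
  refine ⟨fun B _ y => part1 B y, ?_, ?_⟩
  · intro B hcov y s₀ s₀' hps₀ hps₀' hf hne
    have havg : avg D.p (fun s' => B.omegaS s' ∩ nzSet B y)
        (fun s' => rb D e s' y B) s₀
        = avg D.p (fun s' => B.omegaS s' ∩ nzSet B y)
          (fun s' => rb D e s' y B) s₀' :=
      avg_congr D.p _ _ hf.symm
    by_cases h1 : rb D e s₀ y B = avg D.p (fun s' => B.omegaS s' ∩ nzSet B y)
        (fun s' => rb D e s' y B) s₀
    · refine strictV B y s₀' hps₀' ?_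
      rw [← havg, ← h1]
      exact fun h => hne h.symm
    · exact strictV B y s₀ hps₀ h1
  · rintro ⟨B, hcov, y, s₀, hps₀, hne⟩
    intro hAdm
    apply hAdm
    refine ⟨zrb D e, ?_, fun B' hc' y' => (part1 B' y').1, B, hcov, y, ?_⟩
    · intro B' hcov' y'
      have key := avg_mul_sum D.p hp (fun s' => B'.omegaS s' ∩ nzSet B' y')
        (fun s' => e s' y' B') (fun _ => (1 : ℝ)) (fun _ _ _ => rfl)
      have h1 : D.expect (zrb D e) y' B'
          = ∑ s : Finset F, D.p s *
              (avg D.p (fun s' => B'.omegaS s' ∩ nzSet B' y')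
                (fun s' => e s' y' B') s * 1) :=
        Finset.sum_congr rfl fun s _ => by rw [zrb_eq_avg, mul_one]
      have h2 : D.expect e y' B'
          = ∑ s : Finset F, D.p s * (e s y' B' * 1) :=
        Finset.sum_congr rfl fun s _ => by rw [mul_one]
      rw [h1, key, ← h2]
      exact hunb B' hcov' y'
    · refine strictV B y s₀ hps₀ ?_
      rw [← tower D e y B s₀]
      exact hne
end

section
/- Let p be a design and B a graph covered by p whose study-unit set is a singleton, Ω = {κ}, and let y : Ω → ℝ. If e₀ is an unbiased sufficient estimator satisfying e₀(s₀; y, B) = 0 whenever Ω_s(s₀) = ∅, then e₀(s₀; y, B) = y_κ / π_(κ) for every s₀ ∈ S₀ with κ ∈ Ω_s(s₀); moreover, e₀ is the unique minimizer of ∑_{s₀ ∈ S₀} p(s₀) e(s₀)² (equivalently, of the variance) among all functions e on S₀ vanishing on samples with Ω_s(s₀) = ∅ and satisfying ∑_{s₀ ∈ S₀} p(s₀) e(s₀) = y_κ. -/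
open scoped Classical BigOperators

variable {F : Type} [Fintype F] [DecidableEq F]

/-- The case `Ω = {κ}`: an unbiased sufficient estimator vanishing on samples
with empty study sample equals `y_κ / π_(κ)` whenever `κ` is sampled, and it is
the unique minimizer of `∑ p(s₀) e(s₀)²` among all functions on the support
vanishing on samples with empty study sample and with `∑ p(s₀) e(s₀) = y_κ`. -/
theorem statement4 (D : Design F) (B : BIGraph F) (hcov : D.Covered B)
    (κ : ℕ) (hΩ : B.Omega = {κ}) (y : ℕ → ℝ) (e₀ : Estim F)
    (hunb : D.expect e₀ y B = total B y)
    (hsuf : ∀ s₀ s₀' : Finset F, 0 < D.p s₀ → 0 < D.p s₀' →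
      B.omegaS s₀ = B.omegaS s₀' → e₀ s₀ y B = e₀ s₀' y B)
    (hzero : ∀ s₀ : Finset F, 0 < D.p s₀ → B.omegaS s₀ = ∅ → e₀ s₀ y B = 0) :
    (∀ s₀ : Finset F, 0 < D.p s₀ → κ ∈ B.omegaS s₀ →
      e₀ s₀ y B = y κ / D.piK B κ) ∧
    (∀ e : Finset F → ℝ,
      (∀ s₀ : Finset F, 0 < D.p s₀ → B.omegaS s₀ = ∅ → e s₀ = 0) →
      (∑ s : Finset F, D.p s * e s) = y κ →
      ((∑ s : Finset F, D.p s * e₀ s y B ^ 2) ≤ ∑ s : Finset F, D.p s * e s ^ 2 ∧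
       ((∑ s : Finset F, D.p s * e s ^ 2) = ∑ s : Finset F, D.p s * e₀ s y B ^ 2 →
        ∀ s₀ : Finset F, 0 < D.p s₀ → e s₀ = e₀ s₀ y B))) := by
  have hκΩ : κ ∈ B.Omega := by rw [hΩ]; exact Finset.mem_singleton_self κ
  have hpiK : 0 < D.piK B κ := hcov κ hκΩ
  have hsub : ∀ s : Finset F, B.omegaS s ⊆ ({κ} : Finset ℕ) := by
    intro s; rw [← hΩ]; exact Finset.filter_subset _ _
  have hcases : ∀ s : Finset F, κ ∈ B.omegaS s → B.omegaS s = {κ} := fun s h =>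
    Finset.Subset.antisymm (hsub s) (Finset.singleton_subset_iff.mpr h)
  have hcases' : ∀ s : Finset F, κ ∉ B.omegaS s → B.omegaS s = ∅ := by
    intro s h
    ext x
    simp only [Finset.notMem_empty, iff_false]
    intro hx
    have hx' := hsub s hx
    rw [Finset.mem_singleton] at hx'
    rw [hx'] at hx
    exact h hx
  have htot : total B y = y κ := by simp [total, hΩ]
  have hex : ∃ s : Finset F, 0 < D.p s ∧ κ ∈ B.omegaS s := by
    by_contra h
    push_neg at h
    have hz : D.piK B κ = 0 := by
      apply Finset.sum_eq_zero
      intro s _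
      split_ifs with hs
      · by_contra hne
        exact (h s (lt_of_le_of_ne (D.nonneg s) (Ne.symm hne))) hs
      · rfl
    rw [hz] at hpiK
    exact lt_irrefl 0 hpiK
  obtain ⟨st, hpst, hκst⟩ := hex
  set c := e₀ st y B with hcdef
  have he₀eq : ∀ s : Finset F, 0 < D.p s → e₀ s y B = if κ ∈ B.omegaS s then c else 0 := by
    intro s hps
    by_cases h : κ ∈ B.omegaS s
    · rw [if_pos h]; exact hsuf s st hps hpst (by rw [hcases s h, hcases st hκst])
    · rw [if_neg h]; exact hzero s hps (hcases' s h)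
  have hterm : ∀ s : Finset F, D.p s * e₀ s y B = (if κ ∈ B.omegaS s then D.p s else 0) * c := by
    intro s
    rcases eq_or_lt_of_le (D.nonneg s) with h0 | hp
    · rw [← h0]; simp
    · rw [he₀eq s hp]; split_ifs <;> ring
  have hsum : D.piK B κ * c = y κ := by
    have h1 : D.expect e₀ y B = D.piK B κ * c := by
      rw [Design.expect, Design.piK, Finset.sum_mul]
      exact Finset.sum_congr rfl fun s _ => hterm s
    rw [← h1, hunb, htot]
  have hc : c = y κ / D.piK B κ := by
    rw [eq_div_iff hpiK.ne']
    linarith [hsum]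
  have hsq : ∑ s : Finset F, D.p s * e₀ s y B ^ 2 = c * y κ := by
    have h1 : ∀ s : Finset F, D.p s * e₀ s y B ^ 2
        = (if κ ∈ B.omegaS s then D.p s else 0) * c ^ 2 := by
      intro s
      rcases eq_or_lt_of_le (D.nonneg s) with h0 | hp
      · rw [← h0]; simp
      · rw [he₀eq s hp]; split_ifs <;> ring
    calc ∑ s : Finset F, D.p s * e₀ s y B ^ 2
        = ∑ s : Finset F, (if κ ∈ B.omegaS s then D.p s else 0) * c ^ 2 :=
          Finset.sum_congr rfl fun s _ => h1 s
      _ = D.piK B κ * c ^ 2 := by rw [← Finset.sum_mul]; rfl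
      _ = (D.piK B κ * c) * c := by ring
      _ = c * y κ := by rw [hsum]; ring
  refine ⟨fun s hps hκs => by rw [he₀eq s hps, if_pos hκs]; exact hc, ?_⟩
  intro e he0 hmean
  have hcross : ∑ s : Finset F, D.p s * e s * e₀ s y B = c * y κ := by
    have h1 : ∀ s : Finset F, D.p s * e s * e₀ s y B = D.p s * e s * c := by
      intro s
      rcases eq_or_lt_of_le (D.nonneg s) with h0 | hp
      · rw [← h0]; ring
      · rw [he₀eq s hp]
        by_cases h : κ ∈ B.omegaS s
        · rw [if_pos h]
        · rw [if_neg h, he0 s hp (hcases' s h)]; ring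
    calc ∑ s : Finset F, D.p s * e s * e₀ s y B
        = ∑ s : Finset F, D.p s * e s * c := Finset.sum_congr rfl fun s _ => h1 s
      _ = (∑ s : Finset F, D.p s * e s) * c := by rw [← Finset.sum_mul]
      _ = c * y κ := by rw [hmean, mul_comm]
  have key : ∑ s : Finset F, D.p s * (e s - e₀ s y B) ^ 2
      = (∑ s : Finset F, D.p s * e s ^ 2) - ∑ s : Finset F, D.p s * e₀ s y B ^ 2 := by
    have h1 : ∀ s : Finset F, D.p s * (e s - e₀ s y B) ^ 2
        = D.p s * e s ^ 2 - 2 * (D.p s * e s * e₀ s y B) + D.p s * e₀ s y B ^ 2 := by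
      intro s; ring
    rw [Finset.sum_congr rfl fun s _ => h1 s, Finset.sum_add_distrib,
      Finset.sum_sub_distrib, ← Finset.mul_sum, hcross, hsq]
    ring
  have hnn : 0 ≤ ∑ s : Finset F, D.p s * (e s - e₀ s y B) ^ 2 :=
    Finset.sum_nonneg fun s _ => mul_nonneg (D.nonneg s) (sq_nonneg _)
  constructor
  · linarith
  · intro heq s hps
    have hzero' : ∑ s : Finset F, D.p s * (e s - e₀ s y B) ^ 2 = 0 := by linarith
    have hall := (Finset.sum_eq_zero_iff_of_nonneg
      (fun s _ => mul_nonneg (D.nonneg s) (sq_nonneg (e s - e₀ s y B)))).mp hzero'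
    have hs := hall s (Finset.mem_univ s)
    have h2 : (e s - e₀ s y B) ^ 2 = 0 := by
      rcases mul_eq_zero.mp hs with h | h
      · exact absurd h hps.ne'
      · exact h
    have := pow_eq_zero_iff (n := 2) (by norm_num) |>.mp h2
    linarith
end

section
/- Let p be a design and e = e₀ + d an estimator, where e₀ is unbiased and its vector (e₀(s₀; y, B))_{s₀ ∈ S₀} lies in Row(Sᵖ) for every (y, B), and d has expectation E(d) = 0 and its vector (d(s₀; y, B))_{s₀ ∈ S₀} lies in Ker(S̃ᵖ) for every (y, B). Then V(e₀) ≤ V(e) for every (y, B), with strict inequality at every (y, B) for which d(·; y, B) is not identically zero on S₀; in particular, if d is not identically zero, e is inadmissible in D. -/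
open scoped Classical BigOperators

variable {F : Type} [Fintype F] [DecidableEq F]

/-- The support `S₀` of the design, as a type. -/
def Supp (D : Design F) : Type := {s : Finset F // 0 < D.p s}

noncomputable instance (D : Design F) : Fintype (Supp D) := by
  unfold Supp; infer_instance

/-- The sample-space matrix `Sᵖ`, with rows indexed by `F` and columns by `S₀`. -/
noncomputable def Sp (D : Design F) : Matrix F (Supp D) ℝ :=
  Matrix.of fun i s => if i ∈ s.1 then 1 else 0

/-- The matrix `S̃ᵖ` with entries `p(s₀)` for `i ∈ s₀` and `0` otherwise. -/
noncomputable def Spt (D : Design F) : Matrix F (Supp D) ℝ :=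
  Matrix.of fun i s => if i ∈ s.1 then D.p s.1 else 0

/-- The row space `Row(Sᵖ) ⊆ ℝ^{S₀}`. -/
noncomputable def RowSp (D : Design F) : Submodule ℝ (Supp D → ℝ) :=
  Submodule.span ℝ (Set.range fun i : F => fun s : Supp D => Sp D i s)

/-- The kernel `Ker(S̃ᵖ) ⊆ ℝ^{S₀}`. -/
noncomputable def KerSpt (D : Design F) : Submodule ℝ (Supp D → ℝ) :=
  LinearMap.ker (Matrix.mulVecLin (Spt D))

lemma supp_sum (D : Design F) (g : Finset F → ℝ) :
    ∑ s : Supp D, g s.1 * D.p s.1 = ∑ s : Finset F, g s * D.p s := by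
  refine Eq.trans ?_ (Finset.sum_filter_of_ne (p := fun s : Finset F => 0 < D.p s) ?_)
  · exact (Finset.sum_subtype _ (fun x => by simp) fun s => g s * D.p s).symm
  · intro s _ h
    rcases (D.nonneg s).lt_or_eq with h' | h'
    · exact h'
    · exact absurd (by rw [← h', mul_zero]) h

lemma cross_zero (D : Design F) (v w : Supp D → ℝ)
    (hv : v ∈ RowSp D) (hw : (Matrix.mulVecLin (Spt D)) w = 0) :
    ∑ s : Supp D, v s * (D.p s.1 * w s) = 0 := by
  induction hv using Submodule.span_induction with
  | mem x hx =>
      obtain ⟨i, rfl⟩ := hx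
      have hi : ∑ s : Supp D, Spt D i s * w s = 0 := by
        have h := congrFun hw i
        simpa [Matrix.mulVecLin_apply, Matrix.mulVec, dotProduct] using h
      refine Eq.trans (Finset.sum_congr rfl fun s _ => ?_) hi
      simp only [Sp, Spt, Matrix.of_apply]
      by_cases h : i ∈ s.1 <;> simp [h, mul_comm]
  | zero => simp
  | add x y _ _ hx hy =>
      simp only [Pi.add_apply, add_mul, Finset.sum_add_distrib, hx, hy, add_zero]
  | smul c x _ hx =>
      simp only [Pi.smul_apply, smul_eq_mul, mul_assoc, ← Finset.mul_sum, hx, mul_zero]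

/-- Proposition 6: if `e = e₀ + d` where the vector of `e₀` lies in `Row(Sᵖ)` for
every `(y, B)` and `e₀` is unbiased, while `d` has zero expectation and its
vector lies in `Ker(S̃ᵖ)` for every `(y, B)`, then `V(e₀) ≤ V(e)` everywhere,
with strict inequality wherever `d` is not identically zero on the support; in
particular `e` is then inadmissible in the class `D` of unbiased estimators. -/
theorem statement9 (D : Design F) (e₀ d : Estim F)
    (hunb : Unbiased D e₀)
    (hrow : ∀ (y : ℕ → ℝ) (B : BIGraph F),
      (fun s : Supp D => e₀ s.1 y B) ∈ RowSp D)
    (hd0 : ∀ (y : ℕ → ℝ) (B : BIGraph F), D.expect d y B = 0)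
    (hker : ∀ (y : ℕ → ℝ) (B : BIGraph F),
      (fun s : Supp D => d s.1 y B) ∈ KerSpt D) :
    (∀ (y : ℕ → ℝ) (B : BIGraph F),
      D.variance e₀ y B ≤ D.variance (fun s z C => e₀ s z C + d s z C) y B) ∧
    (∀ (y : ℕ → ℝ) (B : BIGraph F), (∃ s₀ : Finset F, 0 < D.p s₀ ∧ d s₀ y B ≠ 0) →
      D.variance e₀ y B < D.variance (fun s z C => e₀ s z C + d s z C) y B) ∧
    ((∃ B : BIGraph F, D.Covered B ∧ ∃ (y : ℕ → ℝ) (s₀ : Finset F),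
        0 < D.p s₀ ∧ d s₀ y B ≠ 0) →
      ¬ AdmissibleIn D (classD D) (fun s z C => e₀ s z C + d s z C)) := by
  have key : ∀ (y : ℕ → ℝ) (B : BIGraph F),
      D.variance (fun s z C => e₀ s z C + d s z C) y B
        = D.variance e₀ y B + ∑ s : Finset F, D.p s * d s y B ^ 2 := by
    intro y B
    have hc : ∑ s : Finset F, (e₀ s y B * d s y B) * D.p s = 0 := by
      have h := cross_zero D (fun s => e₀ s.1 y B) (fun s => d s.1 y B) (hrow y B) (hker y B)
      calc ∑ s : Finset F, (e₀ s y B * d s y B) * D.p s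
          = ∑ s : Supp D, (e₀ s.1 y B * d s.1 y B) * D.p s.1 :=
            (supp_sum D fun s => e₀ s y B * d s y B).symm
        _ = ∑ s : Supp D, e₀ s.1 y B * (D.p s.1 * d s.1 y B) :=
            Finset.sum_congr rfl fun s _ => by ring
        _ = 0 := h
    have hdz : ∑ s : Finset F, D.p s * d s y B = 0 := hd0 y B
    have expand : ∀ s : Finset F,
        D.p s * (e₀ s y B + d s y B - total B y) ^ 2
          = D.p s * (e₀ s y B - total B y) ^ 2 + (D.p s * d s y B ^ 2
            + 2 * ((e₀ s y B * d s y B) * D.p s) + (-2 * total B y) * (D.p s * d s y B)) :=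
      fun s => by ring
    unfold Design.variance
    calc ∑ s : Finset F, D.p s * (e₀ s y B + d s y B - total B y) ^ 2
        = ∑ s : Finset F, (D.p s * (e₀ s y B - total B y) ^ 2 + (D.p s * d s y B ^ 2
            + 2 * ((e₀ s y B * d s y B) * D.p s) + (-2 * total B y) * (D.p s * d s y B))) :=
          Finset.sum_congr rfl fun s _ => expand s
      _ = (∑ s : Finset F, D.p s * (e₀ s y B - total B y) ^ 2)
            + ((∑ s : Finset F, D.p s * d s y B ^ 2)
              + 2 * (∑ s : Finset F, (e₀ s y B * d s y B) * D.p s)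
              + (-2 * total B y) * (∑ s : Finset F, D.p s * d s y B)) := by
          rw [Finset.sum_add_distrib, Finset.sum_add_distrib, Finset.sum_add_distrib,
            ← Finset.mul_sum, ← Finset.mul_sum]
      _ = (∑ s : Finset F, D.p s * (e₀ s y B - total B y) ^ 2)
            + ∑ s : Finset F, D.p s * d s y B ^ 2 := by rw [hc, hdz]; ring
  have hle : ∀ (y : ℕ → ℝ) (B : BIGraph F),
      D.variance e₀ y B ≤ D.variance (fun s z C => e₀ s z C + d s z C) y B := by
    intro y B
    rw [key y B]
    have : 0 ≤ ∑ s : Finset F, D.p s * d s y B ^ 2 :=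
      Finset.sum_nonneg fun s _ => mul_nonneg (D.nonneg s) (sq_nonneg _)
    linarith
  have hlt : ∀ (y : ℕ → ℝ) (B : BIGraph F), (∃ s₀ : Finset F, 0 < D.p s₀ ∧ d s₀ y B ≠ 0) →
      D.variance e₀ y B < D.variance (fun s z C => e₀ s z C + d s z C) y B := by
    intro y B ⟨s₀, hp, hds⟩
    rw [key y B]
    have hpos : 0 < ∑ s : Finset F, D.p s * d s y B ^ 2 :=
      Finset.sum_pos' (fun s _ => mul_nonneg (D.nonneg s) (sq_nonneg _))
        ⟨s₀, Finset.mem_univ _,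
          mul_pos hp (lt_of_le_of_ne (sq_nonneg _) (Ne.symm (pow_ne_zero 2 hds)))⟩
    linarith
  refine ⟨hle, hlt, ?_⟩
  rintro ⟨B, hcov, y, s₀, hp, hds⟩ hadm
  exact hadm ⟨e₀, hunb, fun B' _ y' => hle y' B', B, hcov, y, hlt y B ⟨s₀, hp, hds⟩⟩
end

section
/- Assume ancestry knowledge in BIGS and let p be a design with π_i > 0 for every i ∈ F. Then any unbiased incidence weighting estimator with constant weights w_{iκ} (i.e., weights not depending on the realised sample, satisfying ∑_{i ∈ β_κ} w_{iκ} = 1 for each κ ∈ Ω) is admissible in the class D** of unbiased, zero-invariant and analytic estimators. -/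
open scoped Classical BigOperators

variable {F : Type} [Fintype F] [DecidableEq F]

/-- An estimator is analytic if, for each sample and graph, it is a real-analytic
function of the `y`-values on the study-unit set. -/
def AnalyticEstim (e : Estim F) : Prop :=
  ∀ (s₀ : Finset F) (B : BIGraph F),
    AnalyticOnNhd ℝ
      (fun v : {κ : ℕ // κ ∈ B.Omega} → ℝ =>
        e s₀ (fun κ => if h : κ ∈ B.Omega then v ⟨κ, h⟩ else 0) B)
      Set.univ

/-- Ancestry knowledge: the estimator depends only on the `y`-values of the study
sample, the sample graph and the ancestor sets of the sampled study units. -/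
def AncestryMeasurable (e : Estim F) : Prop :=
  ∀ (s₀ : Finset F) (y y' : ℕ → ℝ) (B B' : BIGraph F),
    (∀ κ ∈ B.omegaS s₀, y κ = y' κ) →
    B.sampleGraph s₀ = B'.sampleGraph s₀ →
    B.omegaS s₀ = B'.omegaS s₀ →
    (∀ κ ∈ B.omegaS s₀, B.beta κ = B'.beta κ) →
    e s₀ y B = e s₀ y' B'

/-- The class `D**` of unbiased, zero-invariant, analytic estimators, under
ancestry knowledge. -/
def classDss (D : Design F) : Set (Estim F) :=
  {e | Unbiased D e ∧ ZeroInvariant e ∧ AnalyticEstim e ∧ AncestryMeasurable e}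

/-! ### Auxiliary machinery for the admissibility proof.

Given a covered graph `B` and a sampling unit `i₀`, we extend `B` by a fresh
study unit `κ₀` whose only ancestor is `i₀`.  Varying the `y`-value at `κ₀`
and using the variance domination on the extended graph forces
`∑_{s ∋ i₀} p(s) (e'(s) - e(s)) = 0` at the original graph; since the IWE is
sample-spanned this kills the covariance term, so the dominating estimator
cannot be strictly better anywhere. -/

namespace AdmisAux

lemma graph_ext {B B' : BIGraph F} (h1 : B.Omega = B'.Omega) (h2 : B.H = B'.H) :
    B = B' := by
  cases B; cases B'; simp_all

/-- Extend a graph by a fresh study unit `κ₀` with single ancestor `i₀`. -/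
noncomputable def extG (B : BIGraph F) (i₀ : F) (κ₀ : ℕ) : BIGraph F where
  Omega := insert κ₀ B.Omega
  H := insert (i₀, κ₀) B.H
  mem_Omega := by
    intro a ha
    rcases Finset.mem_insert.mp ha with h | h
    · subst h; exact Finset.mem_insert_self _ _
    · exact Finset.mem_insert_of_mem (B.mem_Omega a h)

variable {B : BIGraph F} {i₀ : F} {κ₀ : ℕ}

lemma extG_Omega : (extG B i₀ κ₀).Omega = insert κ₀ B.Omega := rfl
lemma extG_H : (extG B i₀ κ₀).H = insert (i₀, κ₀) B.H := rfl

lemma extG_remove (hκ : κ₀ ∉ B.Omega) : (extG B i₀ κ₀).remove {κ₀} = B := by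
  apply graph_ext
  · show (insert κ₀ B.Omega) \ {κ₀} = B.Omega
    ext a
    simp only [Finset.mem_sdiff, Finset.mem_insert, Finset.mem_singleton]
    constructor
    · rintro ⟨h | h, hne⟩
      · exact absurd h hne
      · exact h
    · intro h
      exact ⟨Or.inr h, fun hh => hκ (hh ▸ h)⟩
  · show Finset.filter _ (insert (i₀, κ₀) B.H) = B.H
    ext a
    simp only [Finset.mem_filter, Finset.mem_insert, Finset.mem_singleton]
    constructor
    · rintro ⟨h | h, hne⟩
      · exact absurd (by rw [h]) hne
      · exact h
    · intro h
      refine ⟨Or.inr h, fun hh => hκ ?_⟩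
      rw [← hh]; exact B.mem_Omega a h

lemma mem_omegaS_extG {s : Finset F} {κ : ℕ} :
    κ ∈ (extG B i₀ κ₀).omegaS s ↔ ((κ = κ₀ ∧ i₀ ∈ s) ∨ κ ∈ B.omegaS s) := by
  unfold BIGraph.omegaS
  simp only [Finset.mem_filter, extG_Omega, extG_H, Finset.mem_insert]
  constructor
  · rintro ⟨hΩ, i, his, hedge⟩
    rcases hedge with he | he
    · have h2 : κ = κ₀ := congrArg Prod.snd he
      have h1 : i = i₀ := congrArg Prod.fst he
      exact Or.inl ⟨h2, h1 ▸ his⟩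
    · rcases hΩ with rfl | hΩ
      · exact Or.inr ⟨B.mem_Omega _ he, i, his, he⟩
      · exact Or.inr ⟨hΩ, i, his, he⟩
  · rintro (⟨rfl, hi⟩ | hm)
    · exact ⟨Or.inl rfl, i₀, hi, Or.inl rfl⟩
    · obtain ⟨hΩ, i, his, he⟩ := hm
      exact ⟨Or.inr hΩ, i, his, Or.inr he⟩

lemma mem_omegaS_extG_self {s : Finset F} (hκ : κ₀ ∉ B.Omega) :
    κ₀ ∈ (extG B i₀ κ₀).omegaS s ↔ i₀ ∈ s := by
  rw [mem_omegaS_extG]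
  constructor
  · rintro (⟨-, h⟩ | h)
    · exact h
    · exact absurd (Finset.filter_subset _ _ h) hκ
  · intro h; exact Or.inl ⟨rfl, h⟩

lemma mem_omegaS_extG_ne {s : Finset F} {κ : ℕ} (h : κ ≠ κ₀) :
    κ ∈ (extG B i₀ κ₀).omegaS s ↔ κ ∈ B.omegaS s := by
  rw [mem_omegaS_extG]
  simp [h]

lemma covered_extG {D : Design F} (hpi0 : 0 < D.pii i₀) (hκ : κ₀ ∉ B.Omega)
    (hcov : D.Covered B) : D.Covered (extG B i₀ κ₀) := by
  intro κ hκΩ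
  rcases Finset.mem_insert.mp hκΩ with rfl | hm
  · unfold Design.piK
    rw [Finset.sum_congr rfl fun s _ =>
      if_congr (mem_omegaS_extG_self hκ) rfl rfl]
    exact hpi0
  · have hne : κ ≠ κ₀ := fun h => hκ (h ▸ hm)
    unfold Design.piK
    rw [Finset.sum_congr rfl fun s _ =>
      if_congr (mem_omegaS_extG_ne hne) rfl rfl]
    exact hcov κ hm

lemma beta_extG (hκ : κ₀ ∉ B.Omega) : (extG B i₀ κ₀).beta κ₀ = {i₀} := by
  unfold BIGraph.beta
  ext i
  simp only [Finset.mem_filter, Finset.mem_univ, true_and, Finset.mem_singleton,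
    extG_H, Finset.mem_insert]
  constructor
  · rintro (he | he)
    · exact congrArg Prod.fst he
    · exact absurd (B.mem_Omega _ he) hκ
  · rintro rfl
    exact Or.inl rfl

lemma mem_alpha_extG {i : F} {κ : ℕ} :
    κ ∈ (extG B i₀ κ₀).alpha i ↔ ((i = i₀ ∧ κ = κ₀) ∨ κ ∈ B.alpha i) := by
  unfold BIGraph.alpha
  simp only [Finset.mem_filter, extG_Omega, extG_H, Finset.mem_insert]
  constructor
  · rintro ⟨hΩ, he | he⟩
    · exact Or.inl ⟨congrArg Prod.fst he, congrArg Prod.snd he⟩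
    · rcases hΩ with rfl | hΩ
      · exact Or.inr ⟨B.mem_Omega _ he, he⟩
      · exact Or.inr ⟨hΩ, he⟩
  · rintro (⟨rfl, rfl⟩ | ⟨hΩ, he⟩)
    · exact ⟨Or.inl rfl, Or.inl rfl⟩
    · exact ⟨Or.inr hΩ, Or.inr he⟩

lemma notMem_alpha (hκ : κ₀ ∉ B.Omega) {i : F} : κ₀ ∉ B.alpha i :=
  fun h => hκ (Finset.filter_subset _ _ h)

lemma alpha_extG_self (hκ : κ₀ ∉ B.Omega) :
    (extG B i₀ κ₀).alpha i₀ = insert κ₀ (B.alpha i₀) := by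
  ext κ
  rw [mem_alpha_extG, Finset.mem_insert]
  constructor
  · rintro (⟨-, rfl⟩ | h)
    · exact Or.inl rfl
    · exact Or.inr h
  · rintro (rfl | h)
    · exact Or.inl ⟨rfl, rfl⟩
    · exact Or.inr h

lemma alpha_extG_ne {i : F} (hne : i ≠ i₀) :
    (extG B i₀ κ₀).alpha i = B.alpha i := by
  ext κ
  rw [mem_alpha_extG]
  constructor
  · rintro (⟨h, -⟩ | h)
    · exact absurd h hne
    · exact h
  · exact fun h => Or.inr h

lemma total_extG (hκ : κ₀ ∉ B.Omega) (y : ℕ → ℝ) (x : ℝ) :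
    total (extG B i₀ κ₀) (fun κ => if κ = κ₀ then x else y κ) = total B y + x := by
  unfold total
  rw [show (extG B i₀ κ₀).Omega = insert κ₀ B.Omega from rfl, Finset.sum_insert hκ,
    Finset.sum_congr rfl (fun κ hm => if_neg (fun h : κ = κ₀ => hκ (h ▸ hm)))]
  simp [add_comm]

lemma zeroinv_extG {f : Estim F} (hf : ZeroInvariant f) (hκ : κ₀ ∉ B.Omega)
    (s : Finset F) (y : ℕ → ℝ) :
    f s (fun κ => if κ = κ₀ then (0:ℝ) else y κ) (extG B i₀ κ₀) = f s y B := by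
  have h := hf.1 s (fun κ => if κ = κ₀ then (0:ℝ) else y κ) y (extG B i₀ κ₀) {κ₀}
    (Finset.singleton_subset_iff.mpr (Finset.mem_insert_self _ _))
    (fun κ hm => by rw [Finset.mem_singleton] at hm; simp [hm])
    (fun κ hm => by
      have hne : κ ≠ κ₀ := by
        rw [Finset.mem_sdiff, Finset.mem_singleton] at hm
        exact hm.2
      simp [hne])
  rwa [extG_remove hκ] at h

lemma anc_extG {f : Estim F} (hf : AncestryMeasurable f) (hκ : κ₀ ∉ B.Omega)
    {s : Finset F} (hs : i₀ ∉ s) (y : ℕ → ℝ) (x x' : ℝ) :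
    f s (fun κ => if κ = κ₀ then x else y κ) (extG B i₀ κ₀)
      = f s (fun κ => if κ = κ₀ then x' else y κ) (extG B i₀ κ₀) := by
  apply hf s _ _ (extG B i₀ κ₀) (extG B i₀ κ₀) ?_ rfl rfl (fun κ _ => rfl)
  intro κ hm
  have hne : κ ≠ κ₀ := by
    rintro rfl
    exact hs ((mem_omegaS_extG_self hκ).mp hm)
  simp [hne]

end AdmisAux

namespace AdmisAux

variable {B : BIGraph F} {i₀ : F} {κ₀ : ℕ}

/-- The IWE on the extended graph: the new unit contributes `x / π_{i₀}`
precisely when `i₀` is sampled. -/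
lemma e_extG {D : Design F} {w : F → ℕ → BIGraph F → ℝ} {e : Estim F}
    (hpi : ∀ i : F, 0 < D.pii i)
    (hw : ∀ B : BIGraph F, D.Covered B → ∀ κ ∈ B.Omega, ∑ i ∈ B.beta κ, w i κ B = 1)
    (hform : ∀ (s₀ : Finset F) (y : ℕ → ℝ) (B : BIGraph F),
      e s₀ y B = ∑ i ∈ s₀, (D.pii i)⁻¹ * ∑ κ ∈ B.alpha i, w i κ B * y κ)
    (hze : ZeroInvariant e)
    (hcov : D.Covered B) (hκ : κ₀ ∉ B.Omega)
    (s : Finset F) (y : ℕ → ℝ) (x : ℝ) :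
    e s (fun κ => if κ = κ₀ then x else y κ) (extG B i₀ κ₀)
      = e s y B + x * (if i₀ ∈ s then (D.pii i₀)⁻¹ else 0) := by
  have hcovE : D.Covered (extG B i₀ κ₀) := covered_extG (hpi i₀) hκ hcov
  have hw0 : w i₀ κ₀ (extG B i₀ κ₀) = 1 := by
    have h := hw _ hcovE κ₀ (Finset.mem_insert_self _ _)
    rwa [beta_extG hκ, Finset.sum_singleton] at h
  have inner : ∀ (x : ℝ) (i : F),
      (∑ κ ∈ (extG B i₀ κ₀).alpha i,
          w i κ (extG B i₀ κ₀) * (if κ = κ₀ then x else y κ))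
        = (∑ κ ∈ B.alpha i, w i κ (extG B i₀ κ₀) * y κ)
          + (if i = i₀ then x else 0) := by
    intro x i
    by_cases hi : i = i₀
    · subst hi
      rw [alpha_extG_self hκ, Finset.sum_insert (notMem_alpha hκ), if_pos rfl]
      rw [Finset.sum_congr rfl
        (fun κ hm => by rw [if_neg (fun h : κ = κ₀ => (notMem_alpha hκ) (h ▸ hm))])]
      simp [hw0, add_comm]
    · rw [alpha_extG_ne hi, if_neg hi, add_zero]
      exact Finset.sum_congr rfl fun κ hm => by
        rw [if_neg (fun h : κ = κ₀ => (notMem_alpha hκ) (h ▸ hm))]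
  have hx : e s (fun κ => if κ = κ₀ then x else y κ) (extG B i₀ κ₀)
      = (∑ i ∈ s, (D.pii i)⁻¹ * ∑ κ ∈ B.alpha i, w i κ (extG B i₀ κ₀) * y κ)
        + (if i₀ ∈ s then (D.pii i₀)⁻¹ * x else 0) := by
    rw [hform s _ (extG B i₀ κ₀),
      Finset.sum_congr rfl (fun i _ => by rw [inner x i])]
    have split : ∀ i : F,
        (D.pii i)⁻¹ * ((∑ κ ∈ B.alpha i, w i κ (extG B i₀ κ₀) * y κ)
            + (if i = i₀ then x else 0))
          = (D.pii i)⁻¹ * (∑ κ ∈ B.alpha i, w i κ (extG B i₀ κ₀) * y κ)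
            + (if i = i₀ then (D.pii i)⁻¹ * x else 0) := by
      intro i
      by_cases hi : i = i₀ <;> simp [hi, mul_add]
    rw [Finset.sum_congr rfl fun i _ => split i, Finset.sum_add_distrib,
      Finset.sum_ite_eq' s i₀ (fun i => (D.pii i)⁻¹ * x)]
  have h0 : (∑ i ∈ s, (D.pii i)⁻¹ * ∑ κ ∈ B.alpha i, w i κ (extG B i₀ κ₀) * y κ)
      = e s y B := by
    have hz := zeroinv_extG (B := B) (i₀ := i₀) (κ₀ := κ₀) hze hκ s y
    rw [hform s _ (extG B i₀ κ₀),
      Finset.sum_congr rfl (fun i _ => by rw [inner 0 i])] at hz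
    simpa using hz
  rw [hx, h0]
  by_cases hs : i₀ ∈ s <;> simp [hs, mul_comm]

end AdmisAux

namespace AdmisAux

/-- Key bound: if `e'` has everywhere no larger variance than the IWE `e`, then
for every sampling unit `i₀` and every `x`, the quantity
`2x · (∑_{s ∋ i₀} p(s)(e'(s) - e(s))) / π_{i₀}` is bounded by a constant. -/
lemma keybound {D : Design F} {w : F → ℕ → BIGraph F → ℝ} {e e' : Estim F}
    (hpi : ∀ i : F, 0 < D.pii i)
    (hw : ∀ B : BIGraph F, D.Covered B → ∀ κ ∈ B.Omega, ∑ i ∈ B.beta κ, w i κ B = 1)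
    (hform : ∀ (s₀ : Finset F) (y : ℕ → ℝ) (B : BIGraph F),
      e s₀ y B = ∑ i ∈ s₀, (D.pii i)⁻¹ * ∑ κ ∈ B.alpha i, w i κ B * y κ)
    (hU : Unbiased D e) (hZ : ZeroInvariant e) (hM : AncestryMeasurable e)
    (hU' : Unbiased D e') (hZ' : ZeroInvariant e') (hM' : AncestryMeasurable e')
    (hle : ∀ B : BIGraph F, D.Covered B → ∀ y : ℕ → ℝ,
      D.variance e' y B ≤ D.variance e y B)
    {B₀ : BIGraph F} (hB₀ : D.Covered B₀) (y₀ : ℕ → ℝ)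
    {κ₀ : ℕ} (hκ₀ : κ₀ ∉ B₀.Omega) (i₀ : F) (x : ℝ) :
    2 * x * ((∑ s : Finset F, if i₀ ∈ s then D.p s * (e' s y₀ B₀ - e s y₀ B₀) else 0)
        * (D.pii i₀)⁻¹)
      ≤ ∑ s : Finset F, D.p s * (e s y₀ B₀ - total B₀ y₀) ^ 2 := by
  have hcovE : D.Covered (extG B₀ i₀ κ₀) := covered_extG (hpi i₀) hκ₀ hB₀
  have hvar := hle (extG B₀ i₀ κ₀) hcovE (fun κ => if κ = κ₀ then x else y₀ κ)
  have htot := total_extG (i₀ := i₀) hκ₀ y₀ x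
  have hef : ∀ s : Finset F,
      e s (fun κ => if κ = κ₀ then x else y₀ κ) (extG B₀ i₀ κ₀)
        = e s y₀ B₀ + x * (if i₀ ∈ s then (D.pii i₀)⁻¹ else 0) :=
    fun s => e_extG hpi hw hform hZ hB₀ hκ₀ s y₀ x
  -- for samples not containing i₀, the estimators do not depend on x
  have hets : ∀ s : Finset F, i₀ ∉ s →
      e s (fun κ => if κ = κ₀ then x else y₀ κ) (extG B₀ i₀ κ₀) = e s y₀ B₀ := by
    intro s hs
    rw [hef s, if_neg hs, mul_zero, add_zero]
  have hdts : ∀ s : Finset F, i₀ ∉ s →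
      e' s (fun κ => if κ = κ₀ then x else y₀ κ) (extG B₀ i₀ κ₀) = e' s y₀ B₀ := by
    intro s hs
    rw [anc_extG hM' hκ₀ hs y₀ x 0]
    exact zeroinv_extG hZ' hκ₀ s y₀
  -- unbiasedness: the mean of the difference vanishes on both graphs
  have hz : ∑ s : Finset F, D.p s *
      (e' s (fun κ => if κ = κ₀ then x else y₀ κ) (extG B₀ i₀ κ₀)
        - e s (fun κ => if κ = κ₀ then x else y₀ κ) (extG B₀ i₀ κ₀)) = 0 := by
    have h1 := hU' _ hcovE (fun κ => if κ = κ₀ then x else y₀ κ)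
    have h2 := hU _ hcovE (fun κ => if κ = κ₀ then x else y₀ κ)
    unfold Design.expect at h1 h2
    have h3 : ∑ s : Finset F, D.p s *
        (e' s (fun κ => if κ = κ₀ then x else y₀ κ) (extG B₀ i₀ κ₀)
          - e s (fun κ => if κ = κ₀ then x else y₀ κ) (extG B₀ i₀ κ₀))
        = (∑ s : Finset F, D.p s * e' s (fun κ => if κ = κ₀ then x else y₀ κ) (extG B₀ i₀ κ₀))
          - ∑ s : Finset F, D.p s * e s (fun κ => if κ = κ₀ then x else y₀ κ) (extG B₀ i₀ κ₀) := by
      rw [← Finset.sum_sub_distrib]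
      exact Finset.sum_congr rfl fun s _ => by ring
    rw [h3, h1, h2, sub_self]
  have hz' : ∑ s : Finset F, D.p s * (e' s y₀ B₀ - e s y₀ B₀) = 0 := by
    have h1 := hU' _ hB₀ y₀
    have h2 := hU _ hB₀ y₀
    unfold Design.expect at h1 h2
    have h3 : ∑ s : Finset F, D.p s * (e' s y₀ B₀ - e s y₀ B₀)
        = (∑ s : Finset F, D.p s * e' s y₀ B₀) - ∑ s : Finset F, D.p s * e s y₀ B₀ := by
      rw [← Finset.sum_sub_distrib]
      exact Finset.sum_congr rfl fun s _ => by ring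
    rw [h3, h1, h2, sub_self]
  -- the weighted indicator sum does not depend on x
  have hsplit : ∀ g : Finset F → ℝ,
      (∑ s : Finset F, if i₀ ∈ s then g s else 0)
        = (∑ s : Finset F, g s) - ∑ s : Finset F, if i₀ ∈ s then 0 else g s := by
    intro g
    rw [← Finset.sum_sub_distrib]
    exact Finset.sum_congr rfl fun s _ => by by_cases hs : i₀ ∈ s <;> simp [hs]
  have hitesum : (∑ s : Finset F, if i₀ ∈ s then D.p s *
        (e' s (fun κ => if κ = κ₀ then x else y₀ κ) (extG B₀ i₀ κ₀)
          - e s (fun κ => if κ = κ₀ then x else y₀ κ) (extG B₀ i₀ κ₀)) else 0)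
      = ∑ s : Finset F, if i₀ ∈ s then D.p s * (e' s y₀ B₀ - e s y₀ B₀) else 0 := by
    have hcongr : (∑ s : Finset F, if i₀ ∈ s then (0:ℝ) else D.p s *
          (e' s (fun κ => if κ = κ₀ then x else y₀ κ) (extG B₀ i₀ κ₀)
            - e s (fun κ => if κ = κ₀ then x else y₀ κ) (extG B₀ i₀ κ₀)))
        = ∑ s : Finset F, if i₀ ∈ s then (0:ℝ) else D.p s * (e' s y₀ B₀ - e s y₀ B₀) := by
      refine Finset.sum_congr rfl fun s _ => ?_
      by_cases hs : i₀ ∈ s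
      · simp [hs]
      · simp only [if_neg hs]
        rw [hdts s hs, hets s hs]
    rw [hsplit _, hsplit _, hz, hz', hcongr]
  -- expand the variance inequality on the extended graph
  have h := sub_nonpos.mpr hvar
  unfold Design.variance at h
  rw [← Finset.sum_sub_distrib] at h
  have hper : ∀ s : Finset F,
      D.p s * (e' s (fun κ => if κ = κ₀ then x else y₀ κ) (extG B₀ i₀ κ₀)
          - total (extG B₀ i₀ κ₀) (fun κ => if κ = κ₀ then x else y₀ κ)) ^ 2
        - D.p s * (e s (fun κ => if κ = κ₀ then x else y₀ κ) (extG B₀ i₀ κ₀)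
          - total (extG B₀ i₀ κ₀) (fun κ => if κ = κ₀ then x else y₀ κ)) ^ 2
      = D.p s * (((e' s (fun κ => if κ = κ₀ then x else y₀ κ) (extG B₀ i₀ κ₀)
            - e s (fun κ => if κ = κ₀ then x else y₀ κ) (extG B₀ i₀ κ₀))) ^ 2
          + 2 * (e' s (fun κ => if κ = κ₀ then x else y₀ κ) (extG B₀ i₀ κ₀)
            - e s (fun κ => if κ = κ₀ then x else y₀ κ) (extG B₀ i₀ κ₀))
            * (e s y₀ B₀ - total B₀ y₀))
        + 2 * x * ((if i₀ ∈ s then D.p s *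
            (e' s (fun κ => if κ = κ₀ then x else y₀ κ) (extG B₀ i₀ κ₀)
              - e s (fun κ => if κ = κ₀ then x else y₀ κ) (extG B₀ i₀ κ₀)) else 0)
            * (D.pii i₀)⁻¹)
        - 2 * x * (D.p s *
            (e' s (fun κ => if κ = κ₀ then x else y₀ κ) (extG B₀ i₀ κ₀)
              - e s (fun κ => if κ = κ₀ then x else y₀ κ) (extG B₀ i₀ κ₀))) := by
    intro s
    rw [htot, hef s]
    by_cases hs : i₀ ∈ s
    · simp only [if_pos hs]
      have hpi0 : (D.pii i₀) ≠ 0 := (hpi i₀).ne'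
      field_simp
      ring
    · simp only [if_neg hs]
      ring
  rw [Finset.sum_congr rfl fun s _ => hper s] at h
  rw [Finset.sum_sub_distrib, Finset.sum_add_distrib, ← Finset.mul_sum,
    ← Finset.mul_sum, ← Finset.sum_mul, hitesum, hz] at h
  -- pointwise lower bound on the quadratic part
  have hS1 : -(∑ s : Finset F, D.p s * (e s y₀ B₀ - total B₀ y₀) ^ 2)
      ≤ ∑ s : Finset F, D.p s *
        (((e' s (fun κ => if κ = κ₀ then x else y₀ κ) (extG B₀ i₀ κ₀)
            - e s (fun κ => if κ = κ₀ then x else y₀ κ) (extG B₀ i₀ κ₀))) ^ 2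
          + 2 * (e' s (fun κ => if κ = κ₀ then x else y₀ κ) (extG B₀ i₀ κ₀)
            - e s (fun κ => if κ = κ₀ then x else y₀ κ) (extG B₀ i₀ κ₀))
            * (e s y₀ B₀ - total B₀ y₀)) := by
    rw [← Finset.sum_neg_distrib]
    refine Finset.sum_le_sum fun s _ => ?_
    nlinarith [mul_nonneg (D.nonneg s) (sq_nonneg
      ((e' s (fun κ => if κ = κ₀ then x else y₀ κ) (extG B₀ i₀ κ₀)
        - e s (fun κ => if κ = κ₀ then x else y₀ κ) (extG B₀ i₀ κ₀))
        + (e s y₀ B₀ - total B₀ y₀)))]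
  linarith

end AdmisAux

open AdmisAux

/-- Corollary 2: under ancestry knowledge, for a design with `π_i > 0` for all
`i`, an unbiased IWE with constant weights `w_{iκ}` (not depending on the
realised sample, with `∑_{i ∈ β_κ} w_{iκ} = 1` for each `κ`) is admissible in the
class `D**`. -/

theorem statement11 (D : Design F) (hpi : ∀ i : F, 0 < D.pii i)
    (w : F → ℕ → BIGraph F → ℝ)
    (hw : ∀ B : BIGraph F, D.Covered B → ∀ κ ∈ B.Omega, ∑ i ∈ B.beta κ, w i κ B = 1)
    (e : Estim F)
    (hform : ∀ (s₀ : Finset F) (y : ℕ → ℝ) (B : BIGraph F),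
      e s₀ y B = ∑ i ∈ s₀, (D.pii i)⁻¹ * ∑ κ ∈ B.alpha i, w i κ B * y κ)
    (he : e ∈ classDss D) :
    AdmissibleIn D (classDss D) e := by
  rintro ⟨e', he', hle, B₀, hB₀, y₀, hlt⟩
  obtain ⟨hU, hZ, -, hM⟩ := he
  obtain ⟨hU', hZ', -, hM'⟩ := he'
  obtain ⟨κ₀, hκ₀⟩ := Infinite.exists_notMem_finset B₀.Omega
  -- Lemma A : for every sampling unit i, ∑_{s ∋ i} p(s) (e'(s) - e(s)) = 0
  have hA : ∀ i : F,
      (∑ s : Finset F, if i ∈ s then D.p s * (e' s y₀ B₀ - e s y₀ B₀) else 0) = 0 := by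
    intro i
    by_contra hne
    have hπ : (D.pii i)⁻¹ ≠ 0 := inv_ne_zero (hpi i).ne'
    set ψ : ℝ := ∑ s : Finset F, if i ∈ s then D.p s * (e' s y₀ B₀ - e s y₀ B₀) else 0
      with hψ
    set K : ℝ := ∑ s : Finset F, D.p s * (e s y₀ B₀ - total B₀ y₀) ^ 2 with hK
    have hc : ψ * (D.pii i)⁻¹ ≠ 0 := mul_ne_zero hne hπ
    have hkey := keybound hpi hw hform hU hZ hM hU' hZ' hM' hle hB₀ y₀ hκ₀ i
      ((K + 1) / (2 * (ψ * (D.pii i)⁻¹)))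
    rw [← hψ, ← hK] at hkey
    rw [show 2 * ((K + 1) / (2 * (ψ * (D.pii i)⁻¹))) * (ψ * (D.pii i)⁻¹) = K + 1 from by
      have h2 : (2 : ℝ) * (ψ * (D.pii i)⁻¹) ≠ 0 := mul_ne_zero two_ne_zero hc
      calc 2 * ((K + 1) / (2 * (ψ * (D.pii i)⁻¹))) * (ψ * (D.pii i)⁻¹)
          = (K + 1) / (2 * (ψ * (D.pii i)⁻¹)) * (2 * (ψ * (D.pii i)⁻¹)) := by ring
        _ = K + 1 := div_mul_cancel₀ _ h2] at hkey
    linarith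
  -- unbiasedness at the strict point
  have hz' : ∑ s : Finset F, D.p s * (e' s y₀ B₀ - e s y₀ B₀) = 0 := by
    have h1 := hU' _ hB₀ y₀
    have h2 := hU _ hB₀ y₀
    unfold Design.expect at h1 h2
    have h3 : ∑ s : Finset F, D.p s * (e' s y₀ B₀ - e s y₀ B₀)
        = (∑ s : Finset F, D.p s * e' s y₀ B₀) - ∑ s : Finset F, D.p s * e s y₀ B₀ := by
      rw [← Finset.sum_sub_distrib]
      exact Finset.sum_congr rfl fun s _ => by ring
    rw [h3, h1, h2, sub_self]
  -- the IWE is sample-spanned, so Lemma A kills the covariance term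
  have hcross : ∑ s : Finset F, D.p s * (e' s y₀ B₀ - e s y₀ B₀) * e s y₀ B₀ = 0 := by
    have hgen : ∀ (s : Finset F) (c : ℝ), c * e s y₀ B₀
        = ∑ i : F, (if i ∈ s then
            c * ((D.pii i)⁻¹ * ∑ κ ∈ B₀.alpha i, w i κ B₀ * y₀ κ) else 0) := by
      intro s c
      rw [hform s y₀ B₀, Finset.mul_sum]
      rw [show (∑ i : F, if i ∈ s then
            c * ((D.pii i)⁻¹ * ∑ κ ∈ B₀.alpha i, w i κ B₀ * y₀ κ) else 0)
          = ∑ i ∈ s, c * ((D.pii i)⁻¹ * ∑ κ ∈ B₀.alpha i, w i κ B₀ * y₀ κ) from by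
        rw [Finset.sum_ite_mem, Finset.univ_inter]]
    have hrw : ∀ s : Finset F, D.p s * (e' s y₀ B₀ - e s y₀ B₀) * e s y₀ B₀
        = ∑ i : F, (if i ∈ s then D.p s * (e' s y₀ B₀ - e s y₀ B₀)
            * ((D.pii i)⁻¹ * ∑ κ ∈ B₀.alpha i, w i κ B₀ * y₀ κ) else 0) :=
      fun s => hgen s _
    rw [Finset.sum_congr rfl fun s _ => hrw s, Finset.sum_comm]
    refine Finset.sum_eq_zero fun i _ => ?_
    have hfac : ∀ s : Finset F,
        (if i ∈ s then D.p s * (e' s y₀ B₀ - e s y₀ B₀)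
            * ((D.pii i)⁻¹ * ∑ κ ∈ B₀.alpha i, w i κ B₀ * y₀ κ) else 0)
          = (if i ∈ s then D.p s * (e' s y₀ B₀ - e s y₀ B₀) else 0)
            * ((D.pii i)⁻¹ * ∑ κ ∈ B₀.alpha i, w i κ B₀ * y₀ κ) := by
      intro s
      by_cases hs : i ∈ s <;> simp [hs]
    rw [Finset.sum_congr rfl fun s _ => hfac s, ← Finset.sum_mul, hA i, zero_mul]
  -- variance decomposition at the strict point
  have hvid : D.variance e' y₀ B₀
      = D.variance e y₀ B₀ + ∑ s : Finset F, D.p s * (e' s y₀ B₀ - e s y₀ B₀) ^ 2 := by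
    unfold Design.variance
    have hper : ∀ s : Finset F, D.p s * (e' s y₀ B₀ - total B₀ y₀) ^ 2
        = D.p s * (e s y₀ B₀ - total B₀ y₀) ^ 2
          + D.p s * (e' s y₀ B₀ - e s y₀ B₀) ^ 2
          + 2 * (D.p s * (e' s y₀ B₀ - e s y₀ B₀) * e s y₀ B₀)
          - (2 * total B₀ y₀) * (D.p s * (e' s y₀ B₀ - e s y₀ B₀)) :=
      fun s => by ring
    rw [Finset.sum_congr rfl fun s _ => hper s, Finset.sum_sub_distrib,
      Finset.sum_add_distrib, Finset.sum_add_distrib, ← Finset.mul_sum,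
      ← Finset.mul_sum, hcross, hz']
    ring
  have hnn : 0 ≤ ∑ s : Finset F, D.p s * (e' s y₀ B₀ - e s y₀ B₀) ^ 2 :=
    Finset.sum_nonneg fun s _ => mul_nonneg (D.nonneg s) (sq_nonneg _)
  linarith
end

section
/- Let p be a design and e any estimator in BIGS. For every graph B and every y, the zero-invariant Rao–Blackwellization preserves the expectation: ∑_{s₀ ∈ S₀} p(s₀) e_ZRB(s₀; y, B) = ∑_{s₀ ∈ S₀} p(s₀) e(s₀; y, B). In particular, if e is unbiased then e_ZRB is unbiased. -/
open scoped Classical BigOperators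

variable {F : Type} [Fintype F] [DecidableEq F]

/-- The zero-invariant Rao–Blackwellization preserves the expectation:
`∑ p(s₀) e_ZRB(s₀; y, B) = ∑ p(s₀) e(s₀; y, B)` for every `(y, B)`; in
particular, if `e` is unbiased then so is `e_ZRB`. -/
theorem statement13 (D : Design F) (e : Estim F) :
    (∀ (y : ℕ → ℝ) (B : BIGraph F),
      ∑ s : Finset F, D.p s * zrb D e s y B = ∑ s : Finset F, D.p s * e s y B) ∧
    (Unbiased D e → Unbiased D (zrb D e)) := by
  have main : ∀ (y : ℕ → ℝ) (B : BIGraph F),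
      ∑ s : Finset F, D.p s * zrb D e s y B = ∑ s : Finset F, D.p s * e s y B := by
    intro y B
    classical
    set k : Finset F → Finset ℕ := fun s => B.omegaS s ∩ nzSet B y with hk
    set supp : Finset (Finset F) := Finset.univ.filter (fun s => 0 < D.p s) with hsupp
    have hzero : ∀ s ∉ supp, D.p s = 0 := by
      intro s hs'
      simp only [supp, Finset.mem_filter, Finset.mem_univ, true_and, not_lt] at hs'
      exact le_antisymm hs' (D.nonneg s)
    have hclass : ∀ s, zrbClass D B y s = supp.filter (fun s' => k s' = k s) := by
      intro s
      ext s'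
      simp [zrbClass, supp, k, Finset.mem_filter, and_assoc]
    have reduce : ∀ f : Finset F → ℝ,
        ∑ s ∈ supp, D.p s * f s = ∑ s : Finset F, D.p s * f s := by
      intro f
      refine Finset.sum_subset (Finset.subset_univ supp) ?_
      intro s _ hs
      simp [hzero s hs]
    rw [← reduce, ← reduce]
    rw [← Finset.sum_fiberwise_of_maps_to (g := k) (t := supp.image k)
        (fun x hx => Finset.mem_image_of_mem k hx) (fun s => D.p s * zrb D e s y B),
      ← Finset.sum_fiberwise_of_maps_to (g := k) (t := supp.image k)
        (fun x hx => Finset.mem_image_of_mem k hx) (fun s => D.p s * e s y B)]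
    refine Finset.sum_congr rfl ?_
    intro t ht
    obtain ⟨s₀, hs₀, hks₀⟩ := Finset.mem_image.mp ht
    have hDn : 0 < ∑ s' ∈ supp.filter (fun s' => k s' = t), D.p s' := by
      refine Finset.sum_pos' (fun i _ => D.nonneg i) ⟨s₀, ?_, ?_⟩
      · exact Finset.mem_filter.mpr ⟨hs₀, hks₀⟩
      · simpa [supp, Finset.mem_filter] using hs₀
    have hzrb : ∀ s ∈ supp.filter (fun s' => k s' = t),
        zrb D e s y B = (∑ s' ∈ supp.filter (fun s' => k s' = t), D.p s' * e s' y B) /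
          (∑ s' ∈ supp.filter (fun s' => k s' = t), D.p s') := by
      intro s hs
      have hks : k s = t := (Finset.mem_filter.mp hs).2
      rw [zrb, hclass s, hks]
    calc ∑ s ∈ supp.filter (fun s' => k s' = t), D.p s * zrb D e s y B
        = ∑ s ∈ supp.filter (fun s' => k s' = t),
            D.p s * ((∑ s' ∈ supp.filter (fun s' => k s' = t), D.p s' * e s' y B) /
              (∑ s' ∈ supp.filter (fun s' => k s' = t), D.p s')) := by
          exact Finset.sum_congr rfl fun s hs => by rw [hzrb s hs]
      _ = (∑ s ∈ supp.filter (fun s' => k s' = t), D.p s) *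
            ((∑ s' ∈ supp.filter (fun s' => k s' = t), D.p s' * e s' y B) /
              (∑ s' ∈ supp.filter (fun s' => k s' = t), D.p s')) := by
          rw [Finset.sum_mul]
      _ = ∑ s ∈ supp.filter (fun s' => k s' = t), D.p s * e s y B := by
          field_simp
  refine ⟨main, ?_⟩
  intro hub B hc y
  rw [Design.expect, main y B]
  exact hub B hc y
end

section
/- Let p be a design with π_i > 0 for every i ∈ F, and B a graph covered by p. An incidence weighting estimator with constant weights w_{iκ}, θ̂(s₀) = ∑_{i ∈ s₀} (1/π_i) ∑_{κ ∈ α_i} w_{iκ} y_κ, is unbiased for θ for every y ∈ ℝ^Ω if and only if ∑_{i ∈ β_κ} w_{iκ} = 1 for each κ ∈ Ω. -/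
open scoped Classical BigOperators

variable {F : Type} [Fintype F] [DecidableEq F]

/-- An IWE with constant weights `w_{iκ}` is unbiased for `θ`, for every `y`, if
and only if `∑_{i ∈ β_κ} w_{iκ} = 1` for each `κ ∈ Ω`. -/
theorem statement15 (D : Design F) (hpi : ∀ i : F, 0 < D.pii i)
    (B : BIGraph F) (hcov : D.Covered B) (w : F → ℕ → ℝ) :
    (∀ y : ℕ → ℝ,
      (∑ s : Finset F, D.p s * ∑ i ∈ s, (D.pii i)⁻¹ * ∑ κ ∈ B.alpha i, w i κ * y κ)
        = total B y) ↔
    ∀ κ ∈ B.Omega, ∑ i ∈ B.beta κ, w i κ = 1 := by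
  have key : ∀ y : ℕ → ℝ,
      (∑ s : Finset F, D.p s * ∑ i ∈ s, (D.pii i)⁻¹ * ∑ κ ∈ B.alpha i, w i κ * y κ)
        = ∑ κ ∈ B.Omega, (∑ i ∈ B.beta κ, w i κ) * y κ := by
    intro y
    have h1 : ∀ c : F → ℝ, (∑ s : Finset F, D.p s * ∑ i ∈ s, c i)
        = ∑ i : F, D.pii i * c i := by
      intro c
      simp only [Finset.mul_sum]
      rw [Finset.sum_comm' (s := Finset.univ) (t := fun s => s)
        (t' := Finset.univ) (s' := fun i => Finset.univ.filter fun s => i ∈ s)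
        (f := fun s i => D.p s * c i) ?_]
      · simp only [Finset.sum_filter, Design.pii, Finset.sum_mul]
        refine Finset.sum_congr rfl fun i _ => Finset.sum_congr rfl fun s _ => ?_
        split_ifs <;> simp
      · intro x y; simp
    rw [h1]
    have h2 : ∀ i : F, D.pii i * ((D.pii i)⁻¹ * ∑ κ ∈ B.alpha i, w i κ * y κ)
        = ∑ κ ∈ B.alpha i, w i κ * y κ := by
      intro i
      rw [← mul_assoc, mul_inv_cancel₀ (ne_of_gt (hpi i)), one_mul]
    simp only [h2]
    simp only [BIGraph.alpha, Finset.sum_filter]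
    rw [Finset.sum_comm]
    refine Finset.sum_congr rfl fun κ _ => ?_
    rw [BIGraph.beta, Finset.sum_filter, Finset.sum_mul]
    refine Finset.sum_congr rfl fun i _ => ?_
    split_ifs <;> simp
  constructor
  · intro h κ hκ
    have := h (fun κ' => if κ' = κ then 1 else 0)
    rw [key] at this
    simp only [total, mul_ite, mul_one, mul_zero] at this
    rw [Finset.sum_ite_eq' B.Omega κ (fun κ' => ∑ i ∈ B.beta κ', w i κ'),
      Finset.sum_ite_eq' B.Omega κ (fun _ => (1:ℝ))] at this
    simpa [hκ] using this
  · intro h y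
    rw [key, total]
    exact Finset.sum_congr rfl fun κ hκ => by rw [h κ hκ, one_mul]
end

section
/- Let p be a design with π_i > 0 for every i ∈ F, and B a graph covered by p. An incidence weighting estimator θ̂(s₀) = ∑_{i ∈ s₀} (1/π_i) ∑_{κ ∈ α_i} W_{iκ}(s₀) y_κ, with weights W_{iκ}(s₀) possibly depending on the realised sample, is unbiased for θ for every y ∈ ℝ^Ω if and only if for each κ ∈ Ω, ∑_{i ∈ β_κ} E(W_{iκ} | i ∈ s₀) = 1, where E(W_{iκ} | i ∈ s₀) = (∑_{s₀ ∋ i} p(s₀) W_{iκ}(s₀)) / π_i. -/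
open scoped Classical BigOperators

variable {F : Type} [Fintype F] [DecidableEq F]

/-- Theorem 2.1 of Zhang (2021b): an IWE with sample-dependent weights
`W_{iκ}(s₀)` is unbiased for `θ`, for every `y`, if and only if
`∑_{i ∈ β_κ} E(W_{iκ} | i ∈ s₀) = 1` for each `κ ∈ Ω`, where
`E(W_{iκ} | i ∈ s₀) = (∑_{s₀ ∋ i} p(s₀) W_{iκ}(s₀)) / π_i`. -/
theorem statement16 (D : Design F) (hpi : ∀ i : F, 0 < D.pii i)
    (B : BIGraph F) (hcov : D.Covered B) (W : F → ℕ → Finset F → ℝ) :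
    (∀ y : ℕ → ℝ,
      (∑ s : Finset F, D.p s * ∑ i ∈ s, (D.pii i)⁻¹ * ∑ κ ∈ B.alpha i, W i κ s * y κ)
        = total B y) ↔
    ∀ κ ∈ B.Omega,
      ∑ i ∈ B.beta κ,
        (∑ s : Finset F, if i ∈ s then D.p s * W i κ s else 0) / D.pii i = 1 := by
  have key : ∀ y : ℕ → ℝ,
      (∑ s : Finset F, D.p s * ∑ i ∈ s, (D.pii i)⁻¹ * ∑ κ ∈ B.alpha i, W i κ s * y κ)
        = ∑ κ ∈ B.Omega,
            (∑ i ∈ B.beta κ,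
              (∑ s : Finset F, if i ∈ s then D.p s * W i κ s else 0) / D.pii i) * y κ := by
    intro y
    have h1 : ∀ s : Finset F,
        D.p s * ∑ i ∈ s, (D.pii i)⁻¹ * ∑ κ ∈ B.alpha i, W i κ s * y κ
          = ∑ i : F, ∑ κ ∈ B.Omega,
              if i ∈ s ∧ (i, κ) ∈ B.H then D.p s * W i κ s * y κ * (D.pii i)⁻¹ else 0 := by
      intro s
      rw [Finset.mul_sum]
      rw [← Finset.sum_filter_add_sum_filter_not Finset.univ (fun i => i ∈ s)]
      have hz : ∑ i ∈ Finset.univ.filter (fun i => ¬ i ∈ s), (∑ κ ∈ B.Omega,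
          if i ∈ s ∧ (i, κ) ∈ B.H then D.p s * W i κ s * y κ * (D.pii i)⁻¹ else 0) = 0 := by
        apply Finset.sum_eq_zero
        intro i hi
        rw [Finset.mem_filter] at hi
        apply Finset.sum_eq_zero
        intro κ _
        simp [hi.2]
      rw [hz, add_zero]
      have hfil : Finset.univ.filter (fun i => i ∈ s) = s := by
        ext i; simp
      rw [hfil]
      apply Finset.sum_congr rfl
      intro i hi
      rw [BIGraph.alpha, Finset.mul_sum, Finset.mul_sum, Finset.sum_filter]
      apply Finset.sum_congr rfl
      intro κ _
      by_cases hik : (i, κ) ∈ B.H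
      · simp [hik, hi]; ring
      · simp [hik, hi]
    calc (∑ s : Finset F, D.p s * ∑ i ∈ s, (D.pii i)⁻¹ * ∑ κ ∈ B.alpha i, W i κ s * y κ)
        = ∑ s : Finset F, ∑ i : F, ∑ κ ∈ B.Omega,
            (if i ∈ s ∧ (i, κ) ∈ B.H then D.p s * W i κ s * y κ * (D.pii i)⁻¹ else 0) := by
          exact Finset.sum_congr rfl fun s _ => h1 s
      _ = ∑ i : F, ∑ κ ∈ B.Omega, ∑ s : Finset F,
            (if i ∈ s ∧ (i, κ) ∈ B.H then D.p s * W i κ s * y κ * (D.pii i)⁻¹ else 0) := by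
          rw [Finset.sum_comm]
          exact Finset.sum_congr rfl fun i _ => Finset.sum_comm
      _ = ∑ κ ∈ B.Omega, ∑ i : F, ∑ s : Finset F,
            (if i ∈ s ∧ (i, κ) ∈ B.H then D.p s * W i κ s * y κ * (D.pii i)⁻¹ else 0) := by
          rw [Finset.sum_comm]
      _ = ∑ κ ∈ B.Omega,
            (∑ i ∈ B.beta κ,
              (∑ s : Finset F, if i ∈ s then D.p s * W i κ s else 0) / D.pii i) * y κ := by
          apply Finset.sum_congr rfl
          intro κ _
          rw [BIGraph.beta, Finset.sum_mul, Finset.sum_filter]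
          apply Finset.sum_congr rfl
          intro i _
          by_cases hik : (i, κ) ∈ B.H
          · simp only [hik, and_true, if_true]
            rw [div_eq_mul_inv, Finset.sum_mul, Finset.sum_mul]
            apply Finset.sum_congr rfl
            intro s _
            by_cases his : i ∈ s
            · simp [his]; ring
            · simp [his]
          · simp only [hik, and_false, if_false]
            simp
  constructor
  · intro h κ hκ
    have := h (fun κ' => if κ' = κ then 1 else 0)
    rw [key] at this
    unfold total at this
    simp only [mul_ite, mul_one, mul_zero] at this
    rw [Finset.sum_ite_eq' B.Omega κ, Finset.sum_ite_eq' B.Omega κ, if_pos hκ, if_pos hκ]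
      at this
    exact this
  · intro h y
    rw [key]
    unfold total
    apply Finset.sum_congr rfl
    intro κ hκ
    rw [h κ hκ, one_mul]
end
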